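/- (Uniqueness for KdV) Let u, v : ℝ × ℝ → ℝ be smooth solutions of the KdV equation u_t + 6 u u_x + u_{xxx} = 0 on ℝ × ℝ, and let t₀ ∈ ℝ. Assume: (i) for every t ∈ ℝ all x-derivatives ∂_x^k u(x,t) and ∂_x^k v(x,t) (k ≥ 0) tend to 0 as x → ±∞; (ii) for every t the functions x ↦ z(x,t)², x ↦ z(x,t) z_t(x,t), x ↦ z(x,t) z_{xxx}(x,t), x ↦ z(x,t)² u_x(x,t) and x ↦ z(x,t) z_x(x,t) v(x,t) are integrable over ℝ, where z := u − v; (iii) the energy E(t) := ∫_ℝ z(x,t)² dx is differentiable in t with E′(t) = ∫_ℝ 2 z(x,t) z_t(x,t) dx; (iv) M(t) := sup_{x∈ℝ} |v_x(x,t)/2 − u_x(x,t)| is finite for each t and t ↦ M(t) is continuous. If u(x, t₀) = v(x, t₀) for all x ∈ ℝ, then u(x,t) = v(x,t) for all x ∈ ℝ and all t ≥ t₀. -/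

import Mathlib

open MeasureTheory Filter

/-- Partial derivative with respect to the first (space) variable. -/
noncomputable def pdx (w : ℝ → ℝ → ℝ) : ℝ → ℝ → ℝ := fun x t => deriv (fun y => w y t) x

/-- Partial derivative with respect to the second (time) variable. -/
noncomputable def pdt (w : ℝ → ℝ → ℝ) : ℝ → ℝ → ℝ := fun x t => deriv (fun s => w x s) t

section infra
lemma hasDerivAt_slice_x {w : ℝ → ℝ → ℝ}
    (hw : ContDiff ℝ (⊤ : ℕ∞) (fun p : ℝ × ℝ => w p.1 p.2)) (x t : ℝ) :
    HasDerivAt (fun y => w y t) (fderiv ℝ (fun p : ℝ × ℝ => w p.1 p.2) (x, t) (1, 0)) x := by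
  have h1 : HasDerivAt (fun y : ℝ => ((y, t) : ℝ × ℝ)) (1, 0) x :=
    (hasDerivAt_id x).prodMk (hasDerivAt_const x t)
  exact ((hw.differentiable (by simp) (x, t)).hasFDerivAt).comp_hasDerivAt x h1

lemma hasDerivAt_pdx {w : ℝ → ℝ → ℝ}
    (hw : ContDiff ℝ (⊤ : ℕ∞) (fun p : ℝ × ℝ => w p.1 p.2)) (x t : ℝ) :
    HasDerivAt (fun y => w y t) (pdx w x t) x :=
  (hasDerivAt_slice_x hw x t).differentiableAt.hasDerivAt

lemma hasDerivAt_pdt {w : ℝ → ℝ → ℝ}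
    (hw : ContDiff ℝ (⊤ : ℕ∞) (fun p : ℝ × ℝ => w p.1 p.2)) (x t : ℝ) :
    HasDerivAt (fun s => w x s) (pdt w x t) t := by
  have h1 : HasDerivAt (fun s : ℝ => ((x, s) : ℝ × ℝ)) (0, 1) t :=
    (hasDerivAt_const t x).prodMk (hasDerivAt_id t)
  exact (((hw.differentiable (by simp) (x, t)).hasFDerivAt).comp_hasDerivAt t h1).differentiableAt.hasDerivAt

lemma contDiff_pdx {w : ℝ → ℝ → ℝ}
    (hw : ContDiff ℝ (⊤ : ℕ∞) (fun p : ℝ × ℝ => w p.1 p.2)) :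
    ContDiff ℝ (⊤ : ℕ∞) (fun p : ℝ × ℝ => pdx w p.1 p.2) := by
  have h : (fun p : ℝ × ℝ => pdx w p.1 p.2)
      = fun p : ℝ × ℝ => fderiv ℝ (fun q : ℝ × ℝ => w q.1 q.2) p (1, 0) := by
    funext p
    exact (hasDerivAt_slice_x hw p.1 p.2).deriv
  rw [h]
  exact (hw.fderiv_right (by simp)).clm_apply contDiff_const

lemma pdx_sub {u v : ℝ → ℝ → ℝ}
    (hu : ContDiff ℝ (⊤ : ℕ∞) (fun p : ℝ × ℝ => u p.1 p.2))
    (hv : ContDiff ℝ (⊤ : ℕ∞) (fun p : ℝ × ℝ => v p.1 p.2)) :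
    pdx (fun x t => u x t - v x t) = fun x t => pdx u x t - pdx v x t := by
  funext x t
  exact ((hasDerivAt_pdx hu x t).sub (hasDerivAt_pdx hv x t)).deriv

lemma continuous_slice_x {w : ℝ → ℝ → ℝ}
    (hw : ContDiff ℝ (⊤ : ℕ∞) (fun p : ℝ × ℝ => w p.1 p.2)) (t : ℝ) :
    Continuous (fun x => w x t) :=
  hw.continuous.comp (continuous_id.prodMk continuous_const)
end infra

section fixedt
variable {u v : ℝ → ℝ → ℝ}
  (hu : ContDiff ℝ (⊤ : ℕ∞) (fun p : ℝ × ℝ => u p.1 p.2))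
  (hv : ContDiff ℝ (⊤ : ℕ∞) (fun p : ℝ × ℝ => v p.1 p.2))

include hu hv

lemma contDiff_z : ContDiff ℝ (⊤ : ℕ∞)
    (fun p : ℝ × ℝ => (fun x t => u x t - v x t) p.1 p.2) := hu.sub hv

lemma pdx3_z : pdx (pdx (pdx (fun x t => u x t - v x t)))
    = fun x t => pdx (pdx (pdx u)) x t - pdx (pdx (pdx v)) x t := by
  rw [pdx_sub hu hv, pdx_sub (contDiff_pdx hu) (contDiff_pdx hv),
    pdx_sub (contDiff_pdx (contDiff_pdx hu)) (contDiff_pdx (contDiff_pdx hv))]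

lemma pointwise_id (hukdv : ∀ x t : ℝ, pdt u x t + 6 * u x t * pdx u x t + pdx (pdx (pdx u)) x t = 0)
    (hvkdv : ∀ x t : ℝ, pdt v x t + 6 * v x t * pdx v x t + pdx (pdx (pdx v)) x t = 0)
    (x t : ℝ) :
    2 * (u x t - v x t) * pdt (fun x t => u x t - v x t) x t
      = -(12 * ((u x t - v x t) ^ 2 * pdx u x t))
        - 12 * ((u x t - v x t) * pdx (fun x t => u x t - v x t) x t * v x t)
        - 2 * ((u x t - v x t) * pdx (pdx (pdx (fun x t => u x t - v x t))) x t) := by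
  have h1 : pdt (fun x t => u x t - v x t) x t = pdt u x t - pdt v x t :=
    ((hasDerivAt_pdt hu x t).sub (hasDerivAt_pdt hv x t)).deriv
  have h2 : pdx (fun x t => u x t - v x t) x t = pdx u x t - pdx v x t := by
    rw [pdx_sub hu hv]
  have h3 := congrFun (congrFun (pdx3_z hu hv) x) t
  have h4 := hukdv x t
  have h5 := hvkdv x t
  rw [h1, h2, h3]
  linear_combination (2*(u x t - v x t)) * h4 - (2*(u x t - v x t)) * h5
end fixedt

section main
variable {u v : ℝ → ℝ → ℝ}
  (hu : ContDiff ℝ (⊤ : ℕ∞) (fun p : ℝ × ℝ => u p.1 p.2))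
  (hv : ContDiff ℝ (⊤ : ℕ∞) (fun p : ℝ × ℝ => v p.1 p.2))

include hu hv

lemma iter_decay (hdecayu : ∀ t : ℝ, ∀ k : ℕ,
      Tendsto (fun x => (pdx^[k] u) x t) atTop (nhds 0) ∧
      Tendsto (fun x => (pdx^[k] u) x t) atBot (nhds 0))
    (hdecayv : ∀ t : ℝ, ∀ k : ℕ,
      Tendsto (fun x => (pdx^[k] v) x t) atTop (nhds 0) ∧
      Tendsto (fun x => (pdx^[k] v) x t) atBot (nhds 0)) (t : ℝ) :
    (Tendsto (fun x => u x t - v x t) atTop (nhds 0) ∧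
      Tendsto (fun x => u x t - v x t) atBot (nhds 0)) ∧
    (Tendsto (fun x => pdx (fun x t => u x t - v x t) x t) atTop (nhds 0) ∧
      Tendsto (fun x => pdx (fun x t => u x t - v x t) x t) atBot (nhds 0)) ∧
    (Tendsto (fun x => pdx (pdx (fun x t => u x t - v x t)) x t) atTop (nhds 0) ∧
      Tendsto (fun x => pdx (pdx (fun x t => u x t - v x t)) x t) atBot (nhds 0)) := by
  have h0u := hdecayu t 0
  have h0v := hdecayv t 0
  have h1u := hdecayu t 1
  have h1v := hdecayv t 1
  have h2u := hdecayu t 2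
  have h2v := hdecayv t 2
  have e1u : pdx^[1] u = pdx u := by rw [Function.iterate_one]
  have e1v : pdx^[1] v = pdx v := by rw [Function.iterate_one]
  have e2u : pdx^[2] u = pdx (pdx u) := by
    rw [show (2:ℕ) = 1 + 1 from rfl, Function.iterate_add_apply, Function.iterate_one]
  have e2v : pdx^[2] v = pdx (pdx v) := by
    rw [show (2:ℕ) = 1 + 1 from rfl, Function.iterate_add_apply, Function.iterate_one]
  rw [e1u] at h1u; rw [e1v] at h1v; rw [e2u] at h2u; rw [e2v] at h2v
  have ez1 : (fun x => pdx (fun x t => u x t - v x t) x t)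
      = fun x => pdx u x t - pdx v x t := by
    funext x; exact congrFun (congrFun (pdx_sub hu hv) x) t
  have ez2 : (fun x => pdx (pdx (fun x t => u x t - v x t)) x t)
      = fun x => pdx (pdx u) x t - pdx (pdx v) x t := by
    funext x
    rw [pdx_sub hu hv]
    exact congrFun (congrFun (pdx_sub (contDiff_pdx hu) (contDiff_pdx hv)) x) t
  refine ⟨⟨by simpa using h0u.1.sub h0v.1, by simpa using h0u.2.sub h0v.2⟩, ?_, ?_⟩
  · rw [ez1]
    exact ⟨by simpa using h1u.1.sub h1v.1, by simpa using h1u.2.sub h1v.2⟩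
  · rw [ez2]
    exact ⟨by simpa using h2u.1.sub h2v.1, by simpa using h2u.2.sub h2v.2⟩

lemma energy_deriv_bound
    (hukdv : ∀ x t : ℝ, pdt u x t + 6 * u x t * pdx u x t + pdx (pdx (pdx u)) x t = 0)
    (hvkdv : ∀ x t : ℝ, pdt v x t + 6 * v x t * pdx v x t + pdx (pdx (pdx v)) x t = 0)
    (hdecayu : ∀ t : ℝ, ∀ k : ℕ,
      Tendsto (fun x => (pdx^[k] u) x t) atTop (nhds 0) ∧
      Tendsto (fun x => (pdx^[k] u) x t) atBot (nhds 0))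
    (hdecayv : ∀ t : ℝ, ∀ k : ℕ,
      Tendsto (fun x => (pdx^[k] v) x t) atTop (nhds 0) ∧
      Tendsto (fun x => (pdx^[k] v) x t) atBot (nhds 0))
    (t : ℝ)
    (I1 : Integrable (fun x => (u x t - v x t) ^ 2))
    (I3 : Integrable (fun x => (u x t - v x t) * pdx (pdx (pdx (fun x t => u x t - v x t))) x t))
    (I4 : Integrable (fun x => (u x t - v x t) ^ 2 * pdx u x t))
    (I5 : Integrable (fun x => (u x t - v x t) * pdx (fun x t => u x t - v x t) x t * v x t))
    (Mt : ℝ)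
    (hMt : IsLUB (Set.range fun x => |pdx v x t / 2 - pdx u x t|) Mt) :
    |∫ x : ℝ, 2 * (u x t - v x t) * pdt (fun x t => u x t - v x t) x t|
      ≤ 12 * Mt * ∫ x : ℝ, (u x t - v x t) ^ 2 := by
  have hzc := contDiff_z hu hv
  -- pointwise derivatives in x
  have hZ : ∀ x, HasDerivAt (fun y => u y t - v y t)
      (pdx (fun x t => u x t - v x t) x t) x := fun x => hasDerivAt_pdx (w := fun x t => u x t - v x t) hzc x t
  have hZx : ∀ x, HasDerivAt (fun y => pdx (fun x t => u x t - v x t) y t)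
      (pdx (pdx (fun x t => u x t - v x t)) x t) x :=
    fun x => hasDerivAt_pdx (contDiff_pdx hzc) x t
  have hZxx : ∀ x, HasDerivAt (fun y => pdx (pdx (fun x t => u x t - v x t)) y t)
      (pdx (pdx (pdx (fun x t => u x t - v x t))) x t) x :=
    fun x => hasDerivAt_pdx (contDiff_pdx (contDiff_pdx hzc)) x t
  have hV : ∀ x, HasDerivAt (fun y => v y t) (pdx v x t) x := fun x => hasDerivAt_pdx hv x t
  -- decay
  obtain ⟨⟨tZt, tZb⟩, ⟨tZxt, tZxb⟩, ⟨tZxxt, tZxxb⟩⟩ := iter_decay hu hv hdecayu hdecayv t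
  have tVt := (hdecayv t 0).1
  have tVb := (hdecayv t 0).2
  -- FTC A : ∫ z z_xxx = 0
  have hA : (∫ x : ℝ, (u x t - v x t) * pdx (pdx (pdx (fun x t => u x t - v x t))) x t) = 0 := by
    have hg : ∀ x, HasDerivAt
        (fun y => (u y t - v y t) * pdx (pdx (fun x t => u x t - v x t)) y t
          - (pdx (fun x t => u x t - v x t) y t) ^ 2 / 2)
        ((u x t - v x t) * pdx (pdx (pdx (fun x t => u x t - v x t))) x t) x := by
      intro x
      have h := ((hZ x).mul (hZxx x)).sub (((hZx x).pow 2).div_const 2)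
      exact h.congr_deriv (by ring)
    have hbot : Tendsto
        (fun x => (u x t - v x t) * pdx (pdx (fun x t => u x t - v x t)) x t
          - (pdx (fun x t => u x t - v x t) x t) ^ 2 / 2) atBot (nhds 0) := by
      have := (tZb.mul tZxxb).sub ((tZxb.pow 2).div_const 2)
      simpa using this
    have htop : Tendsto
        (fun x => (u x t - v x t) * pdx (pdx (fun x t => u x t - v x t)) x t
          - (pdx (fun x t => u x t - v x t) x t) ^ 2 / 2) atTop (nhds 0) := by
      have := (tZt.mul tZxxt).sub ((tZxt.pow 2).div_const 2)
      simpa using this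
    have := integral_of_hasDerivAt_of_tendsto hg I3 hbot htop
    simpa using this
  -- continuity for measurability
  have hcZ : Continuous (fun x => u x t - v x t) :=
    (continuous_slice_x hu t).sub (continuous_slice_x hv t)
  have hcUx : Continuous (fun x => pdx u x t) := continuous_slice_x (contDiff_pdx hu) t
  have hcVx : Continuous (fun x => pdx v x t) := continuous_slice_x (contDiff_pdx hv) t
  -- integrability of z^2 * (v_x/2 - u_x)
  have hMub : ∀ x, |pdx v x t / 2 - pdx u x t| ≤ Mt := fun x => hMt.1 (Set.mem_range_self x)
  have I6 : Integrable (fun x => (u x t - v x t) ^ 2 * (pdx v x t / 2 - pdx u x t)) := by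
    refine Integrable.mono' (I1.const_mul Mt)
      ((((hcZ.pow 2).mul ((hcVx.div_const 2).sub hcUx))).aestronglyMeasurable)
      (Eventually.of_forall fun x => ?_)
    have h1 := hMub x
    have h0 : (0:ℝ) ≤ (u x t - v x t) ^ 2 := sq_nonneg _
    rw [Real.norm_eq_abs, abs_mul, abs_of_nonneg h0]
    calc (u x t - v x t) ^ 2 * |pdx v x t / 2 - pdx u x t|
        ≤ (u x t - v x t) ^ 2 * Mt := mul_le_mul_of_nonneg_left h1 h0
      _ = Mt * (u x t - v x t) ^ 2 := mul_comm _ _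
  -- integrability of z^2 * v_x
  have I7 : Integrable (fun x => (u x t - v x t) ^ 2 * pdx v x t) := by
    have he : (fun x => (u x t - v x t) ^ 2 * pdx v x t)
        = fun x => 2 * ((u x t - v x t) ^ 2 * (pdx v x t / 2 - pdx u x t))
          + 2 * ((u x t - v x t) ^ 2 * pdx u x t) := by
      funext x; ring
    rw [he]
    exact (I6.const_mul 2).add (I4.const_mul 2)
  -- FTC B : ∫ (12 z z_x v + 6 z^2 v_x) = 0
  have hB : (∫ x : ℝ, (12 * ((u x t - v x t) * pdx (fun x t => u x t - v x t) x t * v x t)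
      + 6 * ((u x t - v x t) ^ 2 * pdx v x t))) = 0 := by
    have hg : ∀ x, HasDerivAt (fun y => 6 * (u y t - v y t) ^ 2 * v y t)
        (12 * ((u x t - v x t) * pdx (fun x t => u x t - v x t) x t * v x t)
          + 6 * ((u x t - v x t) ^ 2 * pdx v x t)) x := by
      intro x
      have h := (((hZ x).pow 2).const_mul 6).mul (hV x)
      exact h.congr_deriv (by simp only [Pi.pow_apply]; ring)
    have hbot : Tendsto (fun x => 6 * (u x t - v x t) ^ 2 * v x t) atBot (nhds 0) := by
      have := ((tZb.pow 2).const_mul 6).mul tVb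
      simpa using this
    have htop : Tendsto (fun x => 6 * (u x t - v x t) ^ 2 * v x t) atTop (nhds 0) := by
      have := ((tZt.pow 2).const_mul 6).mul tVt
      simpa using this
    have := integral_of_hasDerivAt_of_tendsto hg ((I5.const_mul 12).add (I7.const_mul 6)) hbot htop
    simpa using this
  have hsplitB : 12 * (∫ x : ℝ, (u x t - v x t) * pdx (fun x t => u x t - v x t) x t * v x t)
      + 6 * (∫ x : ℝ, (u x t - v x t) ^ 2 * pdx v x t) = 0 := by
    rw [← integral_const_mul, ← integral_const_mul,
      ← integral_add (I5.const_mul 12) (I7.const_mul 6)]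
    exact hB
  -- main identity for the derivative of the energy
  have hEt : (∫ x : ℝ, 2 * (u x t - v x t) * pdt (fun x t => u x t - v x t) x t)
      = ∫ x : ℝ, 12 * ((u x t - v x t) ^ 2 * (pdx v x t / 2 - pdx u x t)) := by
    have e1 : (∫ x : ℝ, 2 * (u x t - v x t) * pdt (fun x t => u x t - v x t) x t)
        = ∫ x : ℝ, (-(12 * ((u x t - v x t) ^ 2 * pdx u x t))
            - 12 * ((u x t - v x t) * pdx (fun x t => u x t - v x t) x t * v x t)
            - 2 * ((u x t - v x t) * pdx (pdx (pdx (fun x t => u x t - v x t))) x t)) := by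
      apply integral_congr_ae
      exact Eventually.of_forall fun x => pointwise_id hu hv hukdv hvkdv x t
    have e2 : (∫ x : ℝ, (-(12 * ((u x t - v x t) ^ 2 * pdx u x t))
            - 12 * ((u x t - v x t) * pdx (fun x t => u x t - v x t) x t * v x t)
            - 2 * ((u x t - v x t) * pdx (pdx (pdx (fun x t => u x t - v x t))) x t)))
        = -(12 * (∫ x : ℝ, (u x t - v x t) ^ 2 * pdx u x t))
            - 12 * (∫ x : ℝ, (u x t - v x t) * pdx (fun x t => u x t - v x t) x t * v x t)
            - 2 * (∫ x : ℝ, (u x t - v x t) * pdx (pdx (pdx (fun x t => u x t - v x t))) x t) := by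
      have IA1 : Integrable (fun x : ℝ => -(12 * ((u x t - v x t) ^ 2 * pdx u x t))) volume :=
        (I4.const_mul 12).neg
      have IA2 : Integrable (fun x : ℝ =>
          12 * ((u x t - v x t) * pdx (fun x t => u x t - v x t) x t * v x t)) volume :=
        I5.const_mul 12
      have IA : Integrable (fun x : ℝ => -(12 * ((u x t - v x t) ^ 2 * pdx u x t))
          - 12 * ((u x t - v x t) * pdx (fun x t => u x t - v x t) x t * v x t)) volume :=
        IA1.sub IA2
      rw [integral_sub IA (I3.const_mul 2), integral_sub IA1 IA2, integral_neg,
        integral_const_mul, integral_const_mul, integral_const_mul]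
    have e3 : (∫ x : ℝ, 12 * ((u x t - v x t) ^ 2 * (pdx v x t / 2 - pdx u x t)))
        = 6 * (∫ x : ℝ, (u x t - v x t) ^ 2 * pdx v x t)
          - 12 * (∫ x : ℝ, (u x t - v x t) ^ 2 * pdx u x t) := by
      have he : (fun x => 12 * ((u x t - v x t) ^ 2 * (pdx v x t / 2 - pdx u x t)))
          = fun x => 6 * ((u x t - v x t) ^ 2 * pdx v x t)
            - 12 * ((u x t - v x t) ^ 2 * pdx u x t) := by
        funext x; ring
      rw [he, integral_sub (I7.const_mul 6) (I4.const_mul 12),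
        integral_const_mul, integral_const_mul]
    rw [e1, e2, hA, e3]
    linarith [hsplitB]
  rw [hEt]
  -- bound the integral
  have hb1 : |∫ x : ℝ, 12 * ((u x t - v x t) ^ 2 * (pdx v x t / 2 - pdx u x t))|
      ≤ ∫ x : ℝ, |12 * ((u x t - v x t) ^ 2 * (pdx v x t / 2 - pdx u x t))| := by
    exact norm_integral_le_integral_norm (μ := volume)
      (fun x : ℝ => 12 * ((u x t - v x t) ^ 2 * (pdx v x t / 2 - pdx u x t)))
  have hb2 : (∫ x : ℝ, |12 * ((u x t - v x t) ^ 2 * (pdx v x t / 2 - pdx u x t))|)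
      ≤ ∫ x : ℝ, 12 * Mt * (u x t - v x t) ^ 2 := by
    refine integral_mono_of_nonneg (Eventually.of_forall fun x => abs_nonneg _)
      (I1.const_mul (12 * Mt)) (Eventually.of_forall fun x => ?_)
    have h1 := hMub x
    have h0 : (0:ℝ) ≤ (u x t - v x t) ^ 2 := sq_nonneg _
    have habs : |12 * ((u x t - v x t) ^ 2 * (pdx v x t / 2 - pdx u x t))|
        = 12 * ((u x t - v x t) ^ 2 * |pdx v x t / 2 - pdx u x t|) := by
      rw [abs_mul, abs_mul, abs_of_nonneg h0]
      norm_num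
    show |12 * ((u x t - v x t) ^ 2 * (pdx v x t / 2 - pdx u x t))|
      ≤ 12 * Mt * (u x t - v x t) ^ 2
    rw [habs]
    nlinarith [abs_nonneg (pdx v x t / 2 - pdx u x t)]
  calc |∫ x : ℝ, 12 * ((u x t - v x t) ^ 2 * (pdx v x t / 2 - pdx u x t))|
      ≤ ∫ x : ℝ, 12 * Mt * (u x t - v x t) ^ 2 := le_trans hb1 hb2
    _ = 12 * Mt * ∫ x : ℝ, (u x t - v x t) ^ 2 := integral_const_mul _ _
end main


/-- Uniqueness for KdV: two smooth, sufficiently rapidly decaying solutions of the KdV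
equation `u_t + 6 u u_x + u_{xxx} = 0` with the same initial data at time `t₀` agree for
all `t ≥ t₀` (under the stated integrability, energy-differentiation, and supremum
hypotheses). -/
theorem kdv_uniqueness (u v : ℝ → ℝ → ℝ)
    (hu : ContDiff ℝ (⊤ : ℕ∞) (fun p : ℝ × ℝ => u p.1 p.2))
    (hv : ContDiff ℝ (⊤ : ℕ∞) (fun p : ℝ × ℝ => v p.1 p.2))
    (hukdv : ∀ x t : ℝ, pdt u x t + 6 * u x t * pdx u x t + pdx (pdx (pdx u)) x t = 0)
    (hvkdv : ∀ x t : ℝ, pdt v x t + 6 * v x t * pdx v x t + pdx (pdx (pdx v)) x t = 0)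
    (t₀ : ℝ)
    -- (i) sufficiently rapid decay of all x-derivatives of u and v
    (hdecayu : ∀ t : ℝ, ∀ k : ℕ,
      Tendsto (fun x => (pdx^[k] u) x t) atTop (nhds 0) ∧
      Tendsto (fun x => (pdx^[k] u) x t) atBot (nhds 0))
    (hdecayv : ∀ t : ℝ, ∀ k : ℕ,
      Tendsto (fun x => (pdx^[k] v) x t) atTop (nhds 0) ∧
      Tendsto (fun x => (pdx^[k] v) x t) atBot (nhds 0))
    -- (ii) integrability of the relevant expressions in z := u - v
    (hint : ∀ t : ℝ,
      Integrable (fun x => (u x t - v x t) ^ 2) ∧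
      Integrable (fun x => (u x t - v x t) * pdt (fun x t => u x t - v x t) x t) ∧
      Integrable (fun x => (u x t - v x t) * pdx (pdx (pdx (fun x t => u x t - v x t))) x t) ∧
      Integrable (fun x => (u x t - v x t) ^ 2 * pdx u x t) ∧
      Integrable (fun x => (u x t - v x t) * pdx (fun x t => u x t - v x t) x t * v x t))
    -- (iii) the energy is differentiable and can be differentiated under the integral
    (hE : ∀ t : ℝ, HasDerivAt (fun s => ∫ x : ℝ, (u x s - v x s) ^ 2)
      (∫ x : ℝ, 2 * (u x t - v x t) * pdt (fun x t => u x t - v x t) x t) t)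
    -- (iv) M(t) = sup_x |v_x/2 - u_x| exists (is finite) for each t and is continuous in t
    (M : ℝ → ℝ)
    (hM : ∀ t : ℝ, IsLUB (Set.range fun x => |pdx v x t / 2 - pdx u x t|) (M t))
    (hMc : Continuous M)
    -- same initial data at time t₀
    (hinit : ∀ x : ℝ, u x t₀ = v x t₀) :
    ∀ x t : ℝ, t₀ ≤ t → u x t = v x t := by
  intro x t ht
  set E : ℝ → ℝ := fun s => ∫ y : ℝ, (u y s - v y s) ^ 2 with hEdef
  have hEnn : ∀ s, 0 ≤ E s := fun s => integral_nonneg fun y => sq_nonneg _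
  have hE0 : E t₀ = 0 := by
    have : (fun y : ℝ => (u y t₀ - v y t₀) ^ 2) = fun _ => (0:ℝ) := by
      funext y; rw [hinit y]; ring
    simp [hEdef, this]
  have hMnn : ∀ s, 0 ≤ M s := fun s =>
    le_trans (abs_nonneg _) ((hM s).1 (Set.mem_range_self 0))
  -- bound M on [t₀, t]
  obtain ⟨c, hcmem, hc⟩ := isCompact_Icc.exists_isMaxOn (Set.nonempty_Icc.2 ht)
    hMc.continuousOn
  set K : ℝ := 12 * M c with hK
  have hKnn : 0 ≤ K := by rw [hK]; exact mul_nonneg (by norm_num) (hMnn c)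
  -- Gronwall
  have hgron : ∀ s ∈ Set.Icc t₀ t, ‖E s‖ ≤ gronwallBound 0 K 0 (s - t₀) := by
    apply norm_le_gronwallBound_of_norm_deriv_right_le
      (f' := fun s => ∫ y : ℝ, 2 * (u y s - v y s) * pdt (fun x t => u x t - v x t) y s)
    · exact fun s _ => (hE s).continuousAt.continuousWithinAt
    · exact fun s _ => (hE s).hasDerivWithinAt
    · simp [hE0]
    · intro s hs
      have hb := energy_deriv_bound hu hv hukdv hvkdv hdecayu hdecayv s
        (hint s).1 (hint s).2.2.1 (hint s).2.2.2.1 (hint s).2.2.2.2 (M s) (hM s)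
      have hMs : M s ≤ M c := hc ⟨hs.1, le_of_lt hs.2⟩
      have h12 : 12 * M s * E s ≤ K * E s := by
        apply mul_le_mul_of_nonneg_right _ (hEnn s)
        linarith
      rw [Real.norm_eq_abs, Real.norm_eq_abs, abs_of_nonneg (hEnn s)]
      calc |∫ y : ℝ, 2 * (u y s - v y s) * pdt (fun x t => u x t - v x t) y s|
          ≤ 12 * M s * E s := hb
        _ ≤ K * E s := h12
        _ ≤ K * E s + 0 := by linarith
  have hEt0 : E t = 0 := by
    have := hgron t ⟨ht, le_refl t⟩
    rw [gronwallBound_ε0] at this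
    simp only [zero_mul] at this
    have h1 : |E t| ≤ 0 := by simpa [Real.norm_eq_abs] using this
    have := hEnn t
    have h2 := abs_nonneg (E t)
    nlinarith [le_abs_self (E t)]
  -- conclude pointwise equality at time t
  have hcont : Continuous (fun y => (u y t - v y t) ^ 2) :=
    (((continuous_slice_x hu t).sub (continuous_slice_x hv t)).pow 2)
  have hae : (fun y => (u y t - v y t) ^ 2) =ᵐ[volume] 0 :=
    (integral_eq_zero_iff_of_nonneg (fun y => sq_nonneg _) (hint t).1).mp hEt0
  have heq : (fun y => (u y t - v y t) ^ 2) = fun _ => (0:ℝ) :=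
    (hcont.ae_eq_iff_eq volume continuous_const).mp hae
  have := congrFun heq x
  have h2 : (u x t - v x t) = 0 := by
    have := pow_eq_zero_iff (n := 2) (by norm_num) |>.mp this
    exact this
  linarith
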